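/- arXiv:1207.0421 — 5 statements merged into one kernel-verified Lean document; each statement's English description precedes it below -/
import Mathlib

section
/- For every configuration c of a sandpile there exists a unique stable configuration σ(c) such that c ⊢ σ(c); moreover σ(c) is independent of the toppling sequence chosen, i.e., every toppling sequence from c that terminates in a stable configuration terminates in this same configuration σ(c), and some toppling sequence from c does terminate in a stable configuration. -/
/-- A sandpile: a finite connected multigraph with a distinguished sink vertex. -/
structure Sandpile where
  /-- vertex set -/
  V : Type
  [fintypeV : Fintype V]
  [decEqV : DecidableEq V]
  /-- symmetric edge-multiplicity function -/
  w : V → V → ℕ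
  w_symm : ∀ u v, w u v = w v u
  w_loopless : ∀ v, w v v = 0
  /-- the sink -/
  sink : V
  connected : (SimpleGraph.fromRel fun u v : V => 0 < w u v).Connected

attribute [instance] Sandpile.fintypeV Sandpile.decEqV

namespace Sandpile

variable (S : Sandpile)

/-- Ordinary (non-sink) vertices. -/
abbrev Ord := {v : S.V // v ≠ S.sink}

/-- Degree of a vertex: total multiplicity of incident edges. -/
def deg (v : S.V) : ℕ := ∑ u, S.w v u

/-- A configuration assigns a number of particles to each ordinary vertex. -/
abbrev Config := S.Ord → ℕ

/-- An ordinary vertex is unstable when it holds at least `deg` particles. -/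
def Unstable (c : S.Config) (v : S.Ord) : Prop := S.deg v.1 ≤ c v

/-- Toppling an (unstable) ordinary vertex. -/
def topple (c : S.Config) (v : S.Ord) : S.Config :=
  fun u => if u = v then c u - S.deg v.1 else c u + S.w v.1 u.1

/-- One toppling step. -/
def Step (c c' : S.Config) : Prop := ∃ v, S.Unstable c v ∧ c' = S.topple c v

/-- A configuration is stable when no ordinary vertex is unstable. -/
def Stable (c : S.Config) : Prop := ∀ v, ¬ S.Unstable c v

/-- Applying a list of topplings in order. -/
def applySeq (c : S.Config) : List S.Ord → S.Config
  | [] => c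
  | v :: L => applySeq (S.topple c v) L

/-- The list of topplings is a valid toppling sequence from `c`:
each vertex toppled is unstable at the moment it is toppled. -/
def ValidSeq (c : S.Config) : List S.Ord → Prop
  | [] => True
  | v :: L => S.Unstable c v ∧ ValidSeq (S.topple c v) L

end Sandpile

/-!
Toppling two distinct unstable vertices gives the same result in either order, and toppling one
vertex never stabilizes another. Hence a vertex unstable in `c` occurs in every stabilizing
sequence from `c` and can be moved to its front; induction on the sequence shows that all
stabilizing sequences reach the same configuration.

For termination, let `n x` count the topplings of `x` in a toppling sequence (`n sink = 0`).
Chips are conserved except for those falling into the sink, so no vertex ever holds more than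
`N = ∑ c` chips, and balancing the chips at `y` gives `n x * w x y ≤ N + n y * deg y`. Following
a path from `x` to the sink therefore bounds `n x` independently of the sequence, which bounds
the length of every toppling sequence from `c`.
-/

namespace Sandpile

variable {S : Sandpile}

section Abelian

lemma Unstable.topple_of_ne {c : S.Config} {u v : S.Ord} (hu : S.Unstable c u) (h : u ≠ v) :
    S.Unstable (S.topple c v) u := by
  unfold Unstable at *
  simp only [topple, if_neg h]
  omega

lemma topple_topple_comm {c : S.Config} {u v : S.Ord} (hu : S.Unstable c u)
    (hv : S.Unstable c v) (huv : u ≠ v) :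
    S.topple (S.topple c u) v = S.topple (S.topple c v) u := by
  unfold Unstable at hu hv
  funext x
  by_cases hxu : x = u <;> by_cases hxv : x = v
  · exact absurd (hxu ▸ hxv) huv
  · subst hxu
    simp only [topple, huv, if_true, if_false]
    omega
  · subst hxv
    simp only [topple, Ne.symm huv, if_true, if_false]
    omega
  · simp only [topple, hxu, hxv, if_false]
    omega

lemma mem_of_unstable_of_stable_applySeq {c : S.Config} {v : S.Ord} {L : List S.Ord}
    (hv : S.Unstable c v) (hL : S.ValidSeq c L) (hs : S.Stable (S.applySeq c L)) : v ∈ L := by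
  induction L generalizing c with
  | nil => exact absurd hv (hs v)
  | cons u L ih =>
    by_cases h : v = u
    · simp [h]
    · exact List.mem_cons_of_mem _ (ih (hv.topple_of_ne h) hL.2 hs)

lemma validSeq_erase_and_applySeq_erase {c : S.Config} {v : S.Ord} {L : List S.Ord}
    (hv : S.Unstable c v) (hL : S.ValidSeq c L) (hmem : v ∈ L) :
    S.ValidSeq (S.topple c v) (L.erase v) ∧
      S.applySeq c L = S.applySeq (S.topple c v) (L.erase v) := by
  induction L generalizing c with
  | nil => simp at hmem
  | cons u L ih =>
    by_cases h : u = v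
    · subst h
      exact ⟨by simpa using hL.2, by simp [applySeq]⟩
    · have hmem' : v ∈ L := (List.mem_cons.mp hmem).resolve_left (Ne.symm h)
      obtain ⟨hvalid, happly⟩ := ih (hv.topple_of_ne (Ne.symm h)) hL.2 hmem'
      have hcomm := topple_topple_comm hL.1 hv h
      rw [List.erase_cons_tail (by simpa [Subtype.ext_iff] using h)]
      refine ⟨⟨hL.1.topple_of_ne h, ?_⟩, ?_⟩
      · rwa [← hcomm]
      · simpa only [applySeq, ← hcomm] using happly

lemma applySeq_eq_of_stable {c : S.Config} {L M : List S.Ord}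
    (hL : S.ValidSeq c L) (hsL : S.Stable (S.applySeq c L))
    (hM : S.ValidSeq c M) (hsM : S.Stable (S.applySeq c M)) :
    S.applySeq c L = S.applySeq c M := by
  induction M generalizing c L with
  | nil =>
    cases L with
    | nil => rfl
    | cons u L => exact absurd hL.1 (hsM u)
  | cons v M ih =>
    obtain ⟨hvalid, happly⟩ :=
      validSeq_erase_and_applySeq_erase hM.1 hL (mem_of_unstable_of_stable_applySeq hM.1 hL hsL)
    rw [happly]
    exact ih hvalid (happly ▸ hsL) hM.2 hsM

end Abelian

section Termination

def toppleCount (L : List S.Ord) (x : S.V) : ℕ := (L.map Subtype.val).count x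

lemma toppleCount_sink (L : List S.Ord) : toppleCount L S.sink = 0 :=
  List.count_eq_zero.mpr (by simp)

lemma toppleCount_cons (v : S.Ord) (L : List S.Ord) (x : S.V) :
    toppleCount (v :: L) x = toppleCount L x + if v.1 = x then 1 else 0 := by
  simp [toppleCount, List.count_cons]

lemma length_eq_sum_toppleCount (L : List S.Ord) : L.length = ∑ x, toppleCount L x := by
  simpa [toppleCount] using
    (Multiset.sum_count_eq_card (s := Finset.univ) (m := (L.map Subtype.val : Multiset S.V))
      (by simp)).symm

lemma deg_eq_w_sink_add_sum (v : S.V) : S.deg v = S.w v S.sink + ∑ u : S.Ord, S.w v u := by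
  rw [deg, ← Finset.add_sum_erase _ _ (Finset.mem_univ S.sink)]
  congr 1
  exact Finset.sum_subtype _ (fun x => by simp) (fun u => S.w v u)

lemma topple_add_ite {c : S.Config} {v : S.Ord} (hv : S.Unstable c v) (u : S.Ord) :
    S.topple c v u + (if u = v then S.deg v.1 else 0) = c u + S.w v.1 u.1 := by
  unfold Unstable at hv
  by_cases h : u = v
  · subst h
    simp only [topple, if_true, S.w_loopless, add_zero]
    omega
  · simp [topple, h]

lemma sum_topple_add_w_sink {c : S.Config} {v : S.Ord} (hv : S.Unstable c v) :
    ∑ u, S.topple c v u + S.w v.1 S.sink = ∑ u, c u := by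
  have h := Finset.sum_congr rfl fun u (_ : u ∈ Finset.univ) => topple_add_ite hv u
  simp only [Finset.sum_add_distrib, Finset.sum_ite_eq', Finset.mem_univ, if_true] at h
  rw [deg_eq_w_sink_add_sum] at h
  omega

lemma sum_applySeq_add_sink {c : S.Config} {L : List S.Ord} (hL : S.ValidSeq c L) :
    ∑ u, S.applySeq c L u + ∑ x, toppleCount L x * S.w x S.sink = ∑ u, c u := by
  induction L generalizing c with
  | nil => simp [applySeq, toppleCount]
  | cons v L ih =>
    have h := ih hL.2
    have hv := sum_topple_add_w_sink hL.1
    simp only [applySeq, toppleCount_cons, add_mul, ite_mul, one_mul, zero_mul,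
      Finset.sum_add_distrib, Finset.sum_ite_eq, Finset.mem_univ, if_true]
    omega

lemma applySeq_add_toppleCount_mul_deg {c : S.Config} {L : List S.Ord} (hL : S.ValidSeq c L)
    (u : S.Ord) :
    S.applySeq c L u + toppleCount L u * S.deg u = c u + ∑ x, toppleCount L x * S.w x u := by
  induction L generalizing c with
  | nil => simp [applySeq, toppleCount]
  | cons v L ih =>
    have h := ih hL.2
    have hv := topple_add_ite hL.1 u
    simp only [applySeq, toppleCount_cons, add_mul, ite_mul, one_mul, zero_mul,
      Finset.sum_add_distrib, Finset.sum_ite_eq, Finset.mem_univ, if_true]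
    by_cases huv : u = v
    · subst huv
      simp only at hv ⊢
      omega
    · simp only [huv, if_false, show v.1 ≠ u.1 from fun e => huv (Subtype.ext e).symm] at hv ⊢
      omega

lemma toppleCount_mul_w_le {c : S.Config} {L : List S.Ord} (hL : S.ValidSeq c L) (x y : S.V) :
    toppleCount L x * S.w x y ≤ ∑ u, c u + toppleCount L y * S.deg y := by
  have hx : toppleCount L x * S.w x y ≤ ∑ z, toppleCount L z * S.w z y :=
    Finset.single_le_sum (f := fun z => toppleCount L z * S.w z y) (fun _ _ => Nat.zero_le _)
      (Finset.mem_univ x)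
  have hmass := sum_applySeq_add_sink hL
  by_cases hy : y = S.sink
  · subst hy
    omega
  · have hfire := applySeq_add_toppleCount_mul_deg hL ⟨y, hy⟩
    dsimp only at hfire
    have hu : S.applySeq c L ⟨y, hy⟩ ≤ ∑ u, S.applySeq c L u :=
      Finset.single_le_sum (fun _ _ => Nat.zero_le _) (Finset.mem_univ _)
    omega

lemma exists_toppleCount_bound (c : S.Config) (x : S.V) :
    ∃ b, ∀ L, S.ValidSeq c L → toppleCount L x ≤ b := by
  suffices ∀ y (p : (SimpleGraph.fromRel fun u v : S.V => 0 < S.w u v).Walk x y), y = S.sink →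
      ∃ b, ∀ L, S.ValidSeq c L → toppleCount L x ≤ b from
    this _ (S.connected.preconnected x S.sink).some rfl
  intro y p hy
  induction p with
  | nil => exact ⟨0, fun L _ => by simp [hy, toppleCount_sink]⟩
  | @cons x z _ hxz _ ih =>
    obtain ⟨b, hb⟩ := ih hy
    have hw : 0 < S.w x z := by
      rcases hxz.2 with h | h
      · exact h
      · rwa [S.w_symm]
    refine ⟨∑ u, c u + b * S.deg z, fun L hL => ?_⟩
    calc toppleCount L x ≤ toppleCount L x * S.w x z := Nat.le_mul_of_pos_right _ hw
      _ ≤ ∑ u, c u + toppleCount L z * S.deg z := toppleCount_mul_w_le hL x z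
      _ ≤ ∑ u, c u + b * S.deg z := by gcongr; exact hb L hL

lemma exists_length_bound (c : S.Config) : ∃ B, ∀ L, S.ValidSeq c L → L.length ≤ B := by
  choose b hb using exists_toppleCount_bound c
  exact ⟨∑ x, b x, fun L hL =>
    (length_eq_sum_toppleCount L).trans_le (Finset.sum_le_sum fun x _ => hb x L hL)⟩

lemma exists_validSeq_stable_of_length_le (B : ℕ) {c : S.Config}
    (hB : ∀ L, S.ValidSeq c L → L.length ≤ B) :
    ∃ L, S.ValidSeq c L ∧ S.Stable (S.applySeq c L) := by
  induction B generalizing c with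
  | zero => exact ⟨[], trivial, fun v hv => by simpa using hB [v] ⟨hv, trivial⟩⟩
  | succ B ih =>
    by_cases hs : S.Stable c
    · exact ⟨[], trivial, hs⟩
    · obtain ⟨v, hv⟩ := not_forall_not.mp hs
      obtain ⟨L, hL, hsL⟩ := ih fun L hL => by simpa using hB (v :: L) ⟨hv, hL⟩
      exact ⟨v :: L, ⟨hv, hL⟩, hsL⟩

lemma exists_validSeq_stable (c : S.Config) :
    ∃ L, S.ValidSeq c L ∧ S.Stable (S.applySeq c L) :=
  (exists_length_bound c).elim fun B hB => exists_validSeq_stable_of_length_le B hB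

end Termination

end Sandpile

/-- Every configuration `c` of a sandpile has a unique stable
configuration `σ(c)` with `c ⊢ σ(c)`: some toppling sequence from `c` terminates
in a stable configuration, and every toppling sequence from `c` terminating in a
stable configuration terminates in this same configuration. -/
theorem sandpile_unique_stabilization (S : Sandpile) (c : S.Config) :
    ∃ σc : S.Config,
      (∃ L : List S.Ord, S.ValidSeq c L ∧ S.applySeq c L = σc ∧ S.Stable σc) ∧
      (∀ L : List S.Ord, S.ValidSeq c L → S.Stable (S.applySeq c L) →
        S.applySeq c L = σc) := by
  obtain ⟨L₀, hL₀, hs₀⟩ := Sandpile.exists_validSeq_stable c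
  exact ⟨S.applySeq c L₀, ⟨L₀, hL₀, rfl, hs₀⟩,
    fun L hL hsL => Sandpile.applySeq_eq_of_stable hL hsL hL₀ hs₀⟩
end

section
/- In a sandpile, if c ⊢ σ(c) where σ(c) is the stabilization of c, then for every k ∈ ℕ one has k·c ⊢ k·σ(c), where k·c denotes the configuration assigning k·c(v) particles to each ordinary vertex v; in particular the stabilization of k·c is k·σ(c) whenever k·σ(c) is stable. -/
namespace Sandpile
variable (S : Sandpile)

lemma applySeq_append (L M : List S.Ord) : ∀ c : S.Config,
    S.applySeq c (L ++ M) = S.applySeq (S.applySeq c L) M := by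
  induction L with
  | nil => intro c; rfl
  | cons v L ih => intro c; simp [applySeq, ih]

lemma validSeq_append {L M : List S.Ord} : ∀ {c : S.Config},
    S.ValidSeq c L → S.ValidSeq (S.applySeq c L) M → S.ValidSeq c (L ++ M) := by
  induction L with
  | nil => intro c _ h2; exact h2
  | cons v L ih =>
    intro c h1 h2
    exact ⟨h1.1, ih h1.2 h2⟩

lemma topple_add {c : S.Config} {v : S.Ord} (hv : S.deg v.1 ≤ c v) (e : S.Config) :
    S.topple (fun u => c u + e u) v = fun u => S.topple c v u + e u := by
  funext u
  unfold topple
  by_cases h : u = v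
  · subst h; simp; omega
  · simp [h]; omega

lemma shift {L : List S.Ord} : ∀ {c : S.Config} (e : S.Config), S.ValidSeq c L →
    S.ValidSeq (fun u => c u + e u) L ∧
      S.applySeq (fun u => c u + e u) L = fun u => S.applySeq c L u + e u := by
  induction L with
  | nil => intro c e _; exact ⟨trivial, rfl⟩
  | cons v L ih =>
    intro c e hv
    have h1 : S.Unstable (fun u => c u + e u) v := le_trans hv.1 (Nat.le_add_right _ _)
    have h2 := S.topple_add hv.1 e
    have h3 := ih e hv.2
    refine ⟨⟨h1, ?_⟩, ?_⟩
    · rw [show S.topple (fun u => c u + e u) v = fun u => S.topple c v u + e u from h2]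
      exact h3.1
    · show S.applySeq (S.topple (fun u => c u + e u) v) L = _
      rw [h2]
      exact h3.2

lemma commute {c : S.Config} {u v : S.Ord} (huv : u ≠ v)
    (hu : S.deg u.1 ≤ c u) (hv : S.deg v.1 ≤ c v) :
    S.topple (S.topple c u) v = S.topple (S.topple c v) u := by
  funext x
  unfold topple
  by_cases hxv : x = v <;> by_cases hxu : x = u
  · exact absurd (hxu ▸ hxv) huv
  · subst hxv; simp [huv.symm, hxu]; omega
  · subst hxu; simp [huv, hxv]; omega
  · simp [hxv, hxu]; omega

lemma extract {L : List S.Ord} : ∀ {c : S.Config} {v : S.Ord},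
    S.Unstable c v → S.ValidSeq c L → S.Stable (S.applySeq c L) →
    ∃ L', L'.length + 1 = L.length ∧ S.ValidSeq (S.topple c v) L' ∧
      S.applySeq (S.topple c v) L' = S.applySeq c L := by
  induction L with
  | nil => intro c v hv _ hst; exact absurd hv (hst v)
  | cons a L ih =>
    intro c v hv hval hst
    obtain ⟨ha, hL⟩ := hval
    by_cases hav : a = v
    · subst hav
      exact ⟨L, rfl, hL, rfl⟩
    · have hv' : S.Unstable (S.topple c a) v := by
        unfold Unstable topple at *
        simp [Ne.symm hav]
        omega
      obtain ⟨L', hlen, hval', happ'⟩ := ih hv' hL hst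
      have hcomm := S.commute hav ha hv
      have ha' : S.Unstable (S.topple c v) a := by
        unfold Unstable topple at *
        simp [hav]
        omega
      refine ⟨a :: L', by simp [← hlen], ⟨ha', ?_⟩, ?_⟩
      · show S.ValidSeq (S.topple (S.topple c v) a) L'
        rw [← hcomm]; exact hval'
      · show S.applySeq (S.topple (S.topple c v) a) L' = _
        rw [← hcomm, happ']; rfl

lemma unique : ∀ (n : ℕ) (L M : List S.Ord) (c : S.Config), L.length = n →
    S.ValidSeq c L → S.Stable (S.applySeq c L) →
    S.ValidSeq c M → S.Stable (S.applySeq c M) →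
    S.applySeq c M = S.applySeq c L := by
  intro n
  induction n using Nat.strong_induction_on with
  | _ n IH =>
    intro L M c hlen hLv hLs hMv hMs
    cases M with
    | nil =>
      cases L with
      | nil => rfl
      | cons v L' => exact absurd hLv.1 (hMs v)
    | cons v M' =>
      have hv : S.Unstable c v := hMv.1
      obtain ⟨L', hlen', hval', happ'⟩ := S.extract hv hLv hLs
      have hlt : L'.length < n := by omega
      have := IH L'.length hlt L' M' (S.topple c v) rfl hval'
        (happ' ▸ hLs) hMv.2 hMs
      show S.applySeq (S.topple c v) M' = _
      rw [this, happ']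

end Sandpile


/-- If `c ⊢ σ(c)` with `σ(c)` stable, then for every `k ∈ ℕ`,
`k·c ⊢ k·σ(c)`; in particular, the stabilization of `k·c` is `k·σ(c)` whenever
`k·σ(c)` is stable. -/
theorem sandpile_linear_superposition (S : Sandpile) (c σc : S.Config) (k : ℕ)
    (hstable : S.Stable σc)
    (h : ∃ L : List S.Ord, S.ValidSeq c L ∧ S.applySeq c L = σc) :
    (∃ L : List S.Ord, S.ValidSeq (fun v => k * c v) L ∧
      S.applySeq (fun v => k * c v) L = fun v => k * σc v) ∧
    (S.Stable (fun v => k * σc v) →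
      ∀ L : List S.Ord, S.ValidSeq (fun v => k * c v) L →
        S.Stable (S.applySeq (fun v => k * c v) L) →
        S.applySeq (fun v => k * c v) L = fun v => k * σc v) := by
  obtain ⟨L, hLv, hLe⟩ := h
  have main : ∀ k : ℕ, ∃ M : List S.Ord, S.ValidSeq (fun v => k * c v) M ∧
      S.applySeq (fun v => k * c v) M = fun v => k * σc v := by
    intro k
    induction k with
    | zero => exact ⟨[], trivial, by funext v; simp [Sandpile.applySeq]⟩
    | succ k ih =>
      obtain ⟨M, hMv, hMe⟩ := ih
      have hL := S.shift (fun v => k * c v) hLv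
      have hM := S.shift (e := σc) hMv
      have e1 : (fun v => (k+1) * c v) = fun u => c u + k * c u := by
        funext v; ring
      have e2 : (fun u => S.applySeq c L u + k * c u) = fun u => (k * c u) + σc u := by
        funext u; rw [hLe]; ring
      refine ⟨L ++ M, ?_, ?_⟩
      · rw [e1]
        refine S.validSeq_append hL.1 ?_
        rw [hL.2, e2]
        exact hM.1
      · rw [e1, S.applySeq_append, hL.2, e2, hM.2]
        funext v
        rw [hMe]
        ring
  obtain ⟨M, hMv, hMe⟩ := main k
  refine ⟨⟨M, hMv, hMe⟩, ?_⟩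
  intro hst L' hL'v hL's
  have := S.unique M.length M L' (fun v => k * c v) rfl hMv (hMe ▸ hst) hL'v hL's
  rw [this, hMe]
end

section
/- The family of n × n grid sandpiles GRID_n satisfies the non-empty interior property NI(2,0): for every pair of ordinary vertices u, v of GRID_n there exists a path from u to v in the grid that is a concatenation of at most 2 subpaths, along each of which the boundary-distance function η varies linearly, i.e., for each such subpath P with initial vertex x₀ there exist constants a_l, a_u, b with |a_l|, |a_u|, |b| ≤ 1 such that every vertex x of P at distance d along P from x₀ satisfies a_l + η(x₀) + b·d ≤ η(x) ≤ a_u + η(x₀) + b·d. -/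
namespace Grid

/-- Ordinary vertices of the `n × n` grid sandpile `GRID_n`. -/
abbrev Vtx (n : ℕ) := Fin n × Fin n

/-- ℓ1-distance between two grid vertices. -/
def l1 {n : ℕ} (a b : Vtx n) : ℕ :=
  ((a.1.val : ℤ) - (b.1.val : ℤ)).natAbs + ((a.2.val : ℤ) - (b.2.val : ℤ)).natAbs

/-- A configuration of `GRID_n`: a number of particles at each ordinary vertex. -/
abbrev Config (n : ℕ) := Vtx n → ℕ

/-- In `GRID_n` every ordinary vertex has degree 4 (edges to the sink make up for
missing grid neighbours), so a vertex is unstable iff it holds at least 4 particles. -/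
def Unstable {n : ℕ} (c : Config n) (v : Vtx n) : Prop := 4 ≤ c v

/-- Toppling a vertex of `GRID_n`: it loses 4 particles and each grid neighbour
gains one (particles sent to the sink disappear). -/
def topple {n : ℕ} (c : Config n) (v : Vtx n) : Config n :=
  fun u => if u = v then c u - 4 else c u + (if l1 u v = 1 then 1 else 0)

/-- A configuration is stable when no vertex is unstable. -/
def Stable {n : ℕ} (c : Config n) : Prop := ∀ v, c v ≤ 3

/-- Applying a list of topplings in order. -/
def applySeq {n : ℕ} (c : Config n) : List (Vtx n) → Config n
  | [] => c
  | v :: L => applySeq (topple c v) L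

/-- The list of topplings is a valid toppling sequence from `c`. -/
def ValidSeq {n : ℕ} (c : Config n) : List (Vtx n) → Prop
  | [] => True
  | v :: L => Unstable c v ∧ ValidSeq (topple c v) L

/-- The ℓ1-ball of radius `m` around `v` (within the grid). -/
def ball1 {n : ℕ} (v : Vtx n) (m : ℕ) : Finset (Vtx n) :=
  Finset.univ.filter fun u => l1 u v ≤ m

/-- `c` floods `U`: during a toppling sequence stabilizing `c`, every vertex of `U`
holds at least one particle at some moment. -/
def Floods {n : ℕ} (c : Config n) (U : Finset (Vtx n)) : Prop :=
  ∃ L : List (Vtx n), ValidSeq c L ∧ Stable (applySeq c L) ∧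
    ∀ u ∈ U, ∃ i : ℕ, 1 ≤ applySeq c (L.take i) u

end Grid

namespace Grid

/-- Boundary vertices of `GRID_n`: the ordinary vertices adjacent to the sink. -/
def IsBoundary {n : ℕ} (u : Vtx n) : Prop :=
  u.1.val = 0 ∨ u.1.val = n - 1 ∨ u.2.val = 0 ∨ u.2.val = n - 1

/-- `η(v)`: the (graph = ℓ1) distance from `v` to the set of boundary vertices. -/
noncomputable def eta {n : ℕ} (v : Vtx n) : ℕ :=
  sInf ((fun u => l1 v u) '' {u : Vtx n | IsBoundary u})

/-- A walk in the grid: consecutive vertices at ℓ1-distance 1. -/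
def IsWalk {n : ℕ} (P : List (Vtx n)) : Prop := P.Chain' fun a b => l1 a b = 1

/-- `η` varies linearly along the path `P`: there are constants `a_l, a_u, b` of
absolute value at most 1 with
`a_l + η(x₀) + b·d ≤ η(x) ≤ a_u + η(x₀) + b·d` for the vertex `x` at distance `d`
along `P` from its initial vertex `x₀`. -/
def LinearEta {n : ℕ} (P : List (Vtx n)) : Prop :=
  ∃ a_l a_u b : ℝ, |a_l| ≤ 1 ∧ |a_u| ≤ 1 ∧ |b| ≤ 1 ∧
    ∀ (h0 : 0 < P.length) (i : ℕ) (hi : i < P.length),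
      a_l + (eta (P.get ⟨0, h0⟩) : ℝ) + b * (i : ℝ) ≤ (eta (P.get ⟨i, hi⟩) : ℝ) ∧
      (eta (P.get ⟨i, hi⟩) : ℝ) ≤ a_u + (eta (P.get ⟨0, h0⟩) : ℝ) + b * (i : ℝ)

end Grid

open Grid

/-!
In coordinates, `η (x, y) = min (min x (n - 1 - x)) (min y (n - 1 - y))`. From any vertex one can
walk straight towards a nearest side of the grid, lowering `η` by exactly one per step, down to
any smaller level; and each level set `{η = k}` is a square frame, connected through its corner
`(k, k)`, along which `η` is constant. So descend from the endpoint with the larger `η` to the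
level of the other one and go round the frame; reversing a walk negates the slope of `η`, which
handles the case where `u` is the lower endpoint.
-/

namespace Grid

open Relation

variable {n : ℕ}

lemma l1_comm (a b : Vtx n) : l1 a b = l1 b a := by
  unfold l1; omega

lemma eta_le_l1 (v : Vtx n) {u : Vtx n} (hu : IsBoundary u) : eta v ≤ l1 v u :=
  Nat.sInf_le ⟨u, hu, rfl⟩

lemma eta_mk {x y : ℕ} (hx : x < n) (hy : y < n) :
    eta ((⟨x, hx⟩, ⟨y, hy⟩) : Vtx n) =
      min (min x (n - 1 - x)) (min y (n - 1 - y)) := by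
  have hn : 0 < n := by omega
  apply le_antisymm
  · have h₁ := eta_le_l1 (⟨x, hx⟩, ⟨y, hy⟩) (u := (⟨0, hn⟩, ⟨y, hy⟩)) (Or.inl rfl)
    have h₂ := eta_le_l1 (⟨x, hx⟩, ⟨y, hy⟩) (u := (⟨n - 1, by omega⟩, ⟨y, hy⟩))
      (Or.inr (Or.inl rfl))
    have h₃ := eta_le_l1 (⟨x, hx⟩, ⟨y, hy⟩) (u := (⟨x, hx⟩, ⟨0, hn⟩))
      (Or.inr (Or.inr (Or.inl rfl)))
    have h₄ := eta_le_l1 (⟨x, hx⟩, ⟨y, hy⟩) (u := (⟨x, hx⟩, ⟨n - 1, by omega⟩))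
      (Or.inr (Or.inr (Or.inr rfl)))
    simp only [l1] at h₁ h₂ h₃ h₄
    omega
  · refine le_csInf ⟨_, (⟨0, hn⟩, ⟨y, hy⟩), Or.inl rfl, rfl⟩ ?_
    rintro _ ⟨⟨⟨a, ha⟩, ⟨b, hb⟩⟩, hbd, rfl⟩
    simp only [Set.mem_ofPred_eq, IsBoundary, l1] at hbd ⊢
    omega

def EtaStep (s : ℤ) (a b : Vtx n) : Prop := l1 a b = 1 ∧ (eta b : ℤ) = eta a + s

lemma EtaStep.swap {s : ℤ} {a b : Vtx n} (h : EtaStep s a b) : EtaStep (-s) b a :=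
  ⟨l1_comm a b ▸ h.1, by rw [h.2]; ring⟩

lemma reflTransGen_etaStep_swap {s : ℤ} {a b : Vtx n} (h : ReflTransGen (EtaStep s) a b) :
    ReflTransGen (EtaStep (-s)) b a :=
  ReflTransGen.mono (fun _ _ h => EtaStep.swap h) _ _ (reflTransGen_swap.mpr h)

lemma eta_getElem_of_isChain {s : ℤ} : ∀ {P : List (Vtx n)}, P.IsChain (EtaStep s) →
    ∀ (i : ℕ) (hi : i < P.length), (eta P[i] : ℤ) = eta (P[0]'(by omega)) + s * i
  | [_], _, 0, _ => by simp
  | _ :: _ :: _, _, 0, _ => by simp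
  | a :: b :: t, h, i + 1, hi => by
    rw [List.isChain_cons_cons] at h
    have ih := eta_getElem_of_isChain h.2 i (by simpa using hi)
    simp only [List.getElem_cons_succ, List.getElem_cons_zero] at ih ⊢
    rw [ih, h.1.2]
    push_cast
    ring

lemma linearEta_of_isChain {s : ℤ} (hs : |s| ≤ 1) {P : List (Vtx n)}
    (h : P.IsChain (EtaStep s)) : LinearEta P := by
  refine ⟨0, 0, s, by simp, by simp, by exact_mod_cast hs, fun h0 i hi => ?_⟩
  have hi : (eta P[i] : ℝ) = eta (P[0]) + s * i := by
    exact_mod_cast eta_getElem_of_isChain h i hi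
  simp only [List.get_eq_getElem, hi, zero_add, le_refl, and_self]

lemma exists_walk_of_reflTransGen {s : ℤ} (hs : |s| ≤ 1) {a b : Vtx n}
    (h : ReflTransGen (EtaStep s) a b) :
    ∃ P : List (Vtx n), P ≠ [] ∧ IsWalk P ∧ LinearEta P ∧
      P.head? = some a ∧ P.getLast? = some b := by
  obtain ⟨l, hl, hlast⟩ := List.exists_isChain_cons_of_relationReflTransGen h
  refine ⟨a :: l, List.cons_ne_nil _ _, hl.imp fun _ _ h => h.1, linearEta_of_isChain hs hl,
    rfl, ?_⟩
  rw [List.getLast?_eq_some_getLast (List.cons_ne_nil _ _), hlast]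

lemma exists_etaStep_neg_one {p : Vtx n} (hp : 1 ≤ eta p) : ∃ q, EtaStep (-1) p q := by
  obtain ⟨⟨x, hx⟩, ⟨y, hy⟩⟩ := p
  rw [eta_mk] at hp
  by_cases hx_nearer : min x (n - 1 - x) ≤ min y (n - 1 - y)
  · by_cases hside : x ≤ n - 1 - x
    · refine ⟨(⟨x - 1, by omega⟩, ⟨y, hy⟩), ?_, ?_⟩
      <;> simp only [l1, eta_mk] <;> omega
    · refine ⟨(⟨x + 1, by omega⟩, ⟨y, hy⟩), ?_, ?_⟩
      <;> simp only [l1, eta_mk] <;> omega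
  · by_cases hside : y ≤ n - 1 - y
    · refine ⟨(⟨x, hx⟩, ⟨y - 1, by omega⟩), ?_, ?_⟩
      <;> simp only [l1, eta_mk] <;> omega
    · refine ⟨(⟨x, hx⟩, ⟨y + 1, by omega⟩), ?_, ?_⟩
      <;> simp only [l1, eta_mk] <;> omega

lemma exists_reflTransGen_etaStep_neg_one (p : Vtx n) {k : ℕ} (hk : k ≤ eta p) :
    ∃ w, eta w = k ∧ ReflTransGen (EtaStep (-1)) p w := by
  obtain ⟨d, hd⟩ := Nat.exists_eq_add_of_le hk
  induction d generalizing p with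
  | zero => exact ⟨p, hd, .refl⟩
  | succ d ih =>
    obtain ⟨q, hq⟩ := exists_etaStep_neg_one (p := p) (by omega)
    have hq_eta := hq.2
    obtain ⟨w, hw, hqw⟩ := ih q (by omega) (by omega)
    exact ⟨w, hw, .head hq hqw⟩

/- On a vertical side of the frame `η = k` step down, elsewhere step left: both moves stay in
the frame and approach its corner `(k, k)`. -/
lemma exists_etaStep_zero_toward_corner {k : ℕ} {p c : Vtx n} (hc₁ : c.1.val = k)
    (hc₂ : c.2.val = k) (hp : eta p = k) (hpc : p ≠ c) :
    ∃ q, EtaStep 0 p q ∧ l1 q c < l1 p c := by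
  obtain ⟨⟨x, hx⟩, ⟨y, hy⟩⟩ := p
  obtain ⟨⟨a, ha⟩, ⟨b, hb⟩⟩ := c
  simp only at hc₁ hc₂
  rw [eta_mk] at hp
  have hxy : x ≠ a ∨ y ≠ b := by
    by_contra! h
    obtain ⟨rfl, rfl⟩ := h
    exact hpc rfl
  by_cases hvert : k < y ∧ min x (n - 1 - x) = k
  · refine ⟨(⟨x, hx⟩, ⟨y - 1, by omega⟩), ⟨?_, ?_⟩, ?_⟩
      <;> simp only [l1, eta_mk] <;> omega
  · refine ⟨(⟨x - 1, by omega⟩, ⟨y, hy⟩), ⟨?_, ?_⟩, ?_⟩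
      <;> simp only [l1, eta_mk] <;> omega

lemma reflTransGen_etaStep_zero_corner {k : ℕ} {p c : Vtx n} (hc₁ : c.1.val = k)
    (hc₂ : c.2.val = k) (hp : eta p = k) : ReflTransGen (EtaStep 0) p c := by
  induction hd : l1 p c using Nat.strong_induction_on generalizing p with
  | _ d ih =>
    by_cases hpc : p = c
    · exact hpc ▸ .refl
    obtain ⟨q, hq, hqc⟩ := exists_etaStep_zero_toward_corner hc₁ hc₂ hp hpc
    exact .head hq (ih _ (hd ▸ hqc) (by have := hq.2; omega) rfl)

lemma reflTransGen_etaStep_zero_of_eta_eq {p q : Vtx n} (h : eta p = eta q) :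
    ReflTransGen (EtaStep 0) p q := by
  have hk : eta p < n := by
    obtain ⟨⟨x, hx⟩, ⟨y, hy⟩⟩ := p
    rw [eta_mk]
    omega
  let c : Vtx n := (⟨eta p, hk⟩, ⟨eta p, hk⟩)
  have hcq := reflTransGen_etaStep_swap
    (reflTransGen_etaStep_zero_corner (c := c) rfl rfl h.symm)
  exact (reflTransGen_etaStep_zero_corner rfl rfl rfl).trans
    (by simpa only [neg_zero] using hcq)

lemma exists_two_slope_route (u v : Vtx n) :
    ∃ (s t : ℤ) (w : Vtx n), |s| ≤ 1 ∧ |t| ≤ 1 ∧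
      ReflTransGen (EtaStep s) u w ∧ ReflTransGen (EtaStep t) w v := by
  rcases le_total (eta v) (eta u) with h | h
  · obtain ⟨w, hw, huw⟩ := exists_reflTransGen_etaStep_neg_one u h
    exact ⟨-1, 0, w, by norm_num, by norm_num, huw, reflTransGen_etaStep_zero_of_eta_eq hw⟩
  · obtain ⟨w, hw, hvw⟩ := exists_reflTransGen_etaStep_neg_one v h
    exact ⟨0, 1, w, by norm_num, by norm_num, reflTransGen_etaStep_zero_of_eta_eq hw.symm,
      by simpa only [neg_neg] using reflTransGen_etaStep_swap hvw⟩

end Grid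

/-- The family of `n × n` grid sandpiles satisfies the non-empty
interior property `NI(2,0)`: every pair of ordinary vertices is joined by a path in
the grid that is a concatenation of at most 2 subpaths, along each of which the
boundary-distance function `η` varies linearly. -/
theorem grid_nonempty_interior (n : ℕ) (u v : Vtx n) :
    ∃ Ps : List (List (Vtx n)),
      Ps ≠ [] ∧ Ps.length ≤ 2 ∧
      (∀ P ∈ Ps, P ≠ [] ∧ IsWalk P ∧ LinearEta P) ∧
      Ps.Chain' (fun P Q => P.getLast? = Q.head?) ∧
      Ps.head?.bind List.head? = some u ∧
      (Ps.getLast?.bind List.getLast?) = some v := by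
  obtain ⟨s, t, w, hs, ht, huw, hwv⟩ := exists_two_slope_route u v
  obtain ⟨P, hP, hPwalk, hPlin, hPu, hPw⟩ := exists_walk_of_reflTransGen hs huw
  obtain ⟨Q, hQ, hQwalk, hQlin, hQw, hQv⟩ := exists_walk_of_reflTransGen ht hwv
  refine ⟨[P, Q], List.cons_ne_nil _ _, by simp, ?_, List.isChain_pair.mpr (hPw.trans hQw.symm),
    by simpa using hPu, by simpa using hQv⟩
  simp only [List.mem_cons, List.not_mem_nil, or_false, forall_eq_or_imp, forall_eq]
  exact ⟨⟨hP, hPwalk, hPlin⟩, hQ, hQwalk, hQlin⟩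
end

section
/- Harnack's inequality for balls in the plane: Let Ω ⊆ ℝ² be open and let h : Ω → ℝ be a positive harmonic function on Ω. Then for every open ball B(p,r) with B(p,r) ⊆ Ω and every q ∈ B(p,r), one has h(q) ≤ ( r / (r − ‖p − q‖) )² · h(p). -/
/-- The Laplacian `Σᵢ ∂²h/∂xᵢ²` of a function on `ℝⁿ` (as `EuclideanSpace ℝ (Fin n)`). -/
noncomputable def laplacian {n : ℕ} (h : EuclideanSpace ℝ (Fin n) → ℝ)
    (x : EuclideanSpace ℝ (Fin n)) : ℝ :=
  ∑ i : Fin n,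
    fderiv ℝ (fun y => fderiv ℝ h y (EuclideanSpace.single i (1 : ℝ))) x
      (EuclideanSpace.single i (1 : ℝ))

/-- `h` is harmonic on the open set `Ω`: twice continuously differentiable with
identically vanishing Laplacian on `Ω`. -/
def HarmonicOn {n : ℕ} (h : EuclideanSpace ℝ (Fin n) → ℝ)
    (Ω : Set (EuclideanSpace ℝ (Fin n))) : Prop :=
  ContDiffOn ℝ 2 h Ω ∧ ∀ x ∈ Ω, laplacian h x = 0

/-! On a disc of radius `R` about `c`, the Poisson kernel at a point `w` with `‖w - c‖ = d < R` is
at most `(R + d) / (R - d)` on the boundary circle. Integrating this bound against the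
nonnegative boundary values of `h` and using the mean value property gives
`h w ≤ (R + d) / (R - d) * h c`, which is sharper than `(R / (R - d)) ^ 2 * h c`. The open ball
is exhausted by closed discs, and `ℝ²` is identified with `ℂ` by a linear isometry, which
preserves the Laplacian. -/

open scoped Laplacian

open InnerProductSpace Metric Real Complex

theorem laplacian_eq_laplacian_of_contDiffAt {n : ℕ} {f : EuclideanSpace ℝ (Fin n) → ℝ}
    {x : EuclideanSpace ℝ (Fin n)} (hf : ContDiffAt ℝ 2 f x) :
    laplacian f x = Δ f x := by
  have hdf : DifferentiableAt ℝ (fderiv ℝ f) x :=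
    (hf.fderiv_right (m := 1) le_rfl).differentiableAt one_ne_zero
  rw [laplacian_eq_iteratedFDeriv_orthonormalBasis f (EuclideanSpace.basisFun (Fin n) ℝ)]
  refine Finset.sum_congr rfl fun i _ => ?_
  rw [iteratedFDeriv_two_apply, fderiv_clm_apply hdf (differentiableAt_const _)]
  simp

theorem HarmonicOn.harmonicOnNhd_interior {n : ℕ} {f : EuclideanSpace ℝ (Fin n) → ℝ}
    {s : Set (EuclideanSpace ℝ (Fin n))} (hf : HarmonicOn f s) :
    HarmonicOnNhd f (interior s) := by
  have hC2 : ∀ y ∈ interior s, ContDiffAt ℝ 2 f y := fun y hy =>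
    hf.1.contDiffAt (mem_interior_iff_mem_nhds.1 hy)
  intro x hx
  refine ⟨hC2 x hx, ?_⟩
  filter_upwards [isOpen_interior.mem_nhds hx] with y hy
  rw [Pi.zero_apply, ← laplacian_eq_laplacian_of_contDiffAt (hC2 y hy)]
  exact hf.2 y (interior_subset hy)

namespace InnerProductSpace

variable {E E' : Type*} [NormedAddCommGroup E] [InnerProductSpace ℝ E] [FiniteDimensional ℝ E]
  [NormedAddCommGroup E'] [InnerProductSpace ℝ E'] [FiniteDimensional ℝ E']
  {F : Type*} [NormedAddCommGroup F] [NormedSpace ℝ F]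

theorem laplacian_comp_linearIsometryEquiv (f : E' → F) (e : E ≃ₗᵢ[ℝ] E') (x : E) :
    Δ (f ∘ e) x = Δ f (e x) := by
  let b := stdOrthonormalBasis ℝ E
  have hcomp : iteratedFDeriv ℝ 2 (f ∘ e) x =
      (iteratedFDeriv ℝ 2 f (e x)).compContinuousLinearMap fun _ => (e : E →L[ℝ] E') := by
    simp only [← iteratedFDerivWithin_univ]
    exact e.toContinuousLinearEquiv.iteratedFDerivWithin_comp_right f uniqueDiffOn_univ
      (Set.mem_univ _) 2
  rw [laplacian_eq_iteratedFDeriv_orthonormalBasis (f ∘ e) b,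
    laplacian_eq_iteratedFDeriv_orthonormalBasis f (b.map e)]
  beta_reduce
  rw [hcomp]
  refine Finset.sum_congr rfl fun i _ => ?_
  simp only [ContinuousMultilinearMap.compContinuousLinearMap_apply]
  congr 1
  ext j
  fin_cases j <;> rfl

theorem HarmonicAt.comp_linearIsometryEquiv {f : E' → F} (e : E ≃ₗᵢ[ℝ] E') {x : E}
    (hf : HarmonicAt f (e x)) : HarmonicAt (f ∘ e) x := by
  refine ⟨hf.1.comp x e.contDiff.contDiffAt, ?_⟩
  filter_upwards [e.continuous.continuousAt.preimage_mem_nhds hf.2] with y hy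
  rw [laplacian_comp_linearIsometryEquiv]
  exact hy

theorem HarmonicOnNhd.comp_linearIsometryEquiv {f : E' → F} {s : Set E'} (e : E ≃ₗᵢ[ℝ] E')
    (hf : HarmonicOnNhd f s) : HarmonicOnNhd (f ∘ e) (e ⁻¹' s) :=
  fun x hx => (hf (e x) hx).comp_linearIsometryEquiv e

end InnerProductSpace

namespace InnerProductSpace.HarmonicOnNhd

variable {f : ℂ → ℝ} {c w : ℂ} {R : ℝ}

theorem harnack_closedBall (hf : HarmonicOnNhd f (closedBall c R))
    (hf₀ : ∀ z ∈ sphere c R, 0 ≤ f z) (hw : w ∈ ball c R) :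
    f w ≤ (R + ‖w - c‖) / (R - ‖w - c‖) * f c := by
  have hR : |R| = R := abs_of_pos (pos_of_mem_ball hw)
  have hf' : HarmonicOnNhd f (closedBall c |R|) := by rwa [hR]
  have hfc : ContinuousOn f (sphere c |R|) := hf'.continuousOn.mono sphere_subset_closedBall
  calc f w = circleAverage ((re ∘ herglotzRieszKernel c w) • f) c R :=
        (hf.circleAverage_re_herglotzRieszKernel_smul hw).symm
    _ ≤ circleAverage (fun z => ((R + ‖w - c‖) / (R - ‖w - c‖)) • f z) c R := by
        refine circleAverage_mono ?_ ?_ fun z hz => ?_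
        · exact ((continuous_re.comp_continuousOn
            (continuousOn_herglotzRieszKernel_sphere hw)).smul hfc).circleIntegrable'
        · exact (hfc.const_smul ((R + ‖w - c‖) / (R - ‖w - c‖))).circleIntegrable'
        · rw [hR] at hz
          exact mul_le_mul_of_nonneg_right (re_herglotzRieszKernel_le hz hw) (hf₀ z hz)
    _ = (R + ‖w - c‖) / (R - ‖w - c‖) * f c := by
        rw [circleAverage_fun_smul, hf'.circleAverage_eq, smul_eq_mul]

theorem harnack_ball (hf : HarmonicOnNhd f (ball c R))
    (hf₀ : ∀ z ∈ ball c R, 0 ≤ f z) (hw : w ∈ ball c R) :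
    f w ≤ (R + ‖w - c‖) / (R - ‖w - c‖) * f c := by
  set d := ‖w - c‖
  have hdR : d < R := mem_ball_iff_norm.1 hw
  have hsmaller : ∀ R' ∈ Set.Ioo d R, f w ≤ (R' + d) / (R' - d) * f c := fun R' hR' =>
    (hf.mono (closedBall_subset_ball hR'.2)).harnack_closedBall
      (fun z hz => hf₀ z (closedBall_subset_ball hR'.2 (sphere_subset_closedBall hz)))
      (mem_ball_iff_norm.2 hR'.1)
  have hcont : ContinuousAt (fun R' => (R' + d) / (R' - d) * f c) R := by
    have : R - d ≠ 0 := (sub_pos.2 hdR).ne'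
    fun_prop (disch := assumption)
  refine ge_of_tendsto (hcont.tendsto.mono_left (nhdsWithin_le_nhds (s := Set.Iio R))) ?_
  filter_upwards [Ioo_mem_nhdsLT hdR] with R' hR' using hsmaller R' hR'

end InnerProductSpace.HarmonicOnNhd

theorem add_div_sub_le_div_sub_sq {r d : ℝ} (hdr : d < r) :
    (r + d) / (r - d) ≤ (r / (r - d)) ^ 2 := by
  have hpos : 0 < r - d := sub_pos.2 hdr
  rw [div_pow, div_le_div_iff₀ hpos (by positivity)]
  nlinarith [sq_nonneg d]

theorem harnack_inequality_for_balls_general (Ω : Set (EuclideanSpace ℝ (Fin 2)))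
    (h : EuclideanSpace ℝ (Fin 2) → ℝ)
    (hharm : HarmonicOn h Ω) (hpos : ∀ x ∈ Ω, 0 < h x)
    (p : EuclideanSpace ℝ (Fin 2)) (r : ℝ) (hball : Metric.ball p r ⊆ Ω)
    (q : EuclideanSpace ℝ (Fin 2)) (hq : q ∈ Metric.ball p r) :
    h q ≤ (r / (r - ‖p - q‖)) ^ 2 * h p := by
  let e : ℂ ≃ₗᵢ[ℝ] EuclideanSpace ℝ (Fin 2) := Complex.orthonormalBasisOneI.repr
  have hharm' : HarmonicOnNhd (h ∘ e) (ball (e.symm p) r) := by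
    rw [← e.preimage_ball]
    exact (hharm.harmonicOnNhd_interior.mono (interior_maximal hball isOpen_ball))
      |>.comp_linearIsometryEquiv e
  have hq' : e.symm q ∈ ball (e.symm p) r := by
    rwa [← e.preimage_ball, Set.mem_preimage, e.apply_symm_apply]
  have hpos' : ∀ z ∈ ball (e.symm p) r, 0 ≤ (h ∘ e) z := by
    intro z hz
    rw [← e.preimage_ball] at hz
    exact (hpos _ (hball hz)).le
  have key := hharm'.harnack_ball hpos' hq'
  simp only [Function.comp_apply, e.apply_symm_apply, ← map_sub, LinearIsometryEquiv.norm_map]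
    at key
  rw [norm_sub_rev] at key
  calc h q ≤ (r + ‖p - q‖) / (r - ‖p - q‖) * h p := key
    _ ≤ (r / (r - ‖p - q‖)) ^ 2 * h p := by
      gcongr ?_ * _
      · exact (hpos p (hball (mem_ball_self (pos_of_mem_ball hq)))).le
      · exact add_div_sub_le_div_sub_sq (by rwa [← dist_eq_norm, dist_comm])

/-- (Harnack's inequality for balls in the plane.) Let
`Ω ⊆ ℝ²` be open and `h` a positive harmonic function on `Ω`. Then for every open
ball `B(p,r) ⊆ Ω` and every `q ∈ B(p,r)`,
`h(q) ≤ (r/(r − ‖p − q‖))² · h(p)`. -/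
theorem harnack_inequality_for_balls (Ω : Set (EuclideanSpace ℝ (Fin 2)))
    (hΩ : IsOpen Ω) (h : EuclideanSpace ℝ (Fin 2) → ℝ)
    (hharm : HarmonicOn h Ω) (hpos : ∀ x ∈ Ω, 0 < h x)
    (p : EuclideanSpace ℝ (Fin 2)) (r : ℝ) (hball : Metric.ball p r ⊆ Ω)
    (q : EuclideanSpace ℝ (Fin 2)) (hq : q ∈ Metric.ball p r) :
    h q ≤ (r / (r - ‖p - q‖)) ^ 2 * h p :=
  harnack_inequality_for_balls_general Ω h hharm hpos p r hball q hq
end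

section
/- Triangle inequality for potentials: Let G be a finite connected multigraph with a distinguished vertex s. For each vertex a ≠ s let π_a : V → ℝ be a function satisfying π_a(s) = 0, π_a(a) = 1, 0 ≤ π_a ≤ 1, and π_a harmonic at every vertex of V \ {s, a}. Then for all vertices i, j, k ∈ V \ {s}: π_i(j) · π_j(k) ≤ π_i(k). -/
/-- A finite connected multigraph, given by a symmetric edge-multiplicity
function without loops. -/
structure Multigraph where
  /-- vertex set -/
  V : Type
  [fintypeV : Fintype V]
  [decEqV : DecidableEq V]
  /-- symmetric edge-multiplicity function -/
  w : V → V → ℕ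
  w_symm : ∀ u v, w u v = w v u
  w_loopless : ∀ v, w v v = 0
  connected : (SimpleGraph.fromRel fun u v : V => 0 < w u v).Connected

attribute [instance] Multigraph.fintypeV Multigraph.decEqV

namespace Multigraph

variable (G : Multigraph)

/-- Degree of a vertex: total multiplicity of incident edges. -/
def deg (v : G.V) : ℕ := ∑ u, G.w v u

/-- A function on the vertices is harmonic at `u` if
`deg(u)·π(u) = Σ_{u'} w(u,u')·π(u')`. -/
def HarmonicAt (π : G.V → ℝ) (u : G.V) : Prop :=
  (G.deg u : ℝ) * π u = ∑ u', (G.w u u' : ℝ) * π u'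

end Multigraph

/-- If `D` is harmonic at `u`, `D u` is a global maximum, and `v` is a neighbor of `u`,
then `D v = D u`. -/
lemma neighbor_eq_of_max (G : Multigraph) (D : G.V → ℝ) (u v : G.V)
    (hmax : ∀ x, D x ≤ D u) (hharm : G.HarmonicAt D u) (hw : 0 < G.w u v) :
    D v = D u := by
  have key : ∑ u', (G.w u u' : ℝ) * (D u - D u') = 0 := by
    have hdeg : (G.deg u : ℝ) = ∑ u', (G.w u u' : ℝ) := by
      simp [Multigraph.deg]
    simp only [mul_sub, Finset.sum_sub_distrib, ← Finset.sum_mul]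
    rw [← hdeg, hharm]
    ring
  have hnn : ∀ x ∈ Finset.univ, 0 ≤ (G.w u x : ℝ) * (D u - D x) := by
    intro x _
    exact mul_nonneg (Nat.cast_nonneg _) (sub_nonneg.mpr (hmax x))
  have := (Finset.sum_eq_zero_iff_of_nonneg hnn).mp key v (Finset.mem_univ v)
  have hwv : (G.w u v : ℝ) ≠ 0 := by positivity
  have := (mul_eq_zero.mp this).resolve_left hwv
  linarith [sub_eq_zero.mp this]

/-- Discrete maximum principle along a walk: if `D u` is a positive global maximum
and there is a walk from `u` to a vertex of `B`, where `D` is harmonic off `B` and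
nonpositive on `B`, we get a contradiction. -/
lemma walk_max_principle (G : Multigraph) (B : Set G.V) (D : G.V → ℝ)
    (hb : ∀ b ∈ B, D b ≤ 0) (hh : ∀ u, u ∉ B → G.HarmonicAt D u) :
    ∀ {u b : G.V}, (SimpleGraph.fromRel fun x y : G.V => 0 < G.w x y).Walk u b →
      b ∈ B → (∀ x, D x ≤ D u) → 0 < D u → False := by
  intro u b p
  induction p with
  | nil =>
    intro hbB _ hpos
    exact absurd (hb _ hbB) (not_le.mpr hpos)
  | @cons u v b h p ih =>
    intro hbB hmax hpos
    by_cases huB : u ∈ B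
    · exact absurd (hb _ huB) (not_le.mpr hpos)
    · obtain ⟨hne, hor⟩ := (SimpleGraph.fromRel_adj _ u v).mp h
      have hw : 0 < G.w u v := by
        rcases hor with h' | h'
        · exact h'
        · rwa [G.w_symm]
      have heq := neighbor_eq_of_max G D u v hmax (hh u huB) hw
      exact ih hbB (fun x => heq ▸ hmax x) (heq ▸ hpos)

/-- (Triangle inequality for potentials.) Let `G` be a finite
connected multigraph with distinguished vertex `s`, and for each vertex `a ≠ s`
let `π a : V → ℝ` satisfy `π a s = 0`, `π a a = 1`, `0 ≤ π a ≤ 1`, with `π a`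
harmonic at every vertex of `V \ {s,a}`. Then for all `i, j, k ≠ s`,
`π_i(j)·π_j(k) ≤ π_i(k)`. -/
theorem potential_triangle_inequality (G : Multigraph) (s : G.V)
    (π : G.V → G.V → ℝ)
    (hs : ∀ a : G.V, a ≠ s → π a s = 0)
    (hself : ∀ a : G.V, a ≠ s → π a a = 1)
    (h01 : ∀ a : G.V, a ≠ s → ∀ x : G.V, 0 ≤ π a x ∧ π a x ≤ 1)
    (hharm : ∀ a : G.V, a ≠ s → ∀ u : G.V, u ≠ s → u ≠ a → G.HarmonicAt (π a) u) :
    ∀ i j k : G.V, i ≠ s → j ≠ s → k ≠ s → π i j * π j k ≤ π i k := by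
  intro i j k hi hj hk
  set D : G.V → ℝ := fun x => π i j * π j x - π i x with hD
  suffices hDk : D k ≤ 0 by simpa [hD] using hDk
  set B : Set G.V := {s, i, j} with hB
  -- boundary values
  have hbdd : ∀ b ∈ B, D b ≤ 0 := by
    intro b hbB
    rcases hbB with hb | hb | hb
    · simp [hD, hb, hs i hi, hs j hj]
    · have h1 := (h01 i hi j).2
      have h2 := (h01 j hj i).2
      have h3 := (h01 i hi j).1
      simp only [hD, hb, hself i hi]
      nlinarith
    · rw [Set.mem_singleton_iff] at hb
      simp only [hD, hb, hself j hj, mul_one, sub_nonpos, le_refl]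
  -- harmonicity off the boundary
  have hharmD : ∀ u, u ∉ B → G.HarmonicAt D u := by
    intro u huB
    simp only [hB, Set.mem_insert_iff, Set.mem_singleton_iff, not_or] at huB
    obtain ⟨hus, hui, huj⟩ := huB
    have h1 := hharm j hj u hus huj
    have h2 := hharm i hi u hus hui
    unfold Multigraph.HarmonicAt at h1 h2 ⊢
    simp only [hD, mul_sub, Finset.sum_sub_distrib]
    rw [← h2]
    have : ∑ u', (G.w u u' : ℝ) * (π i j * π j u') =
        π i j * ∑ u', (G.w u u' : ℝ) * π j u' := by
      rw [Finset.mul_sum]; congr 1; ext u'; ring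
    rw [this, ← h1]
    ring
  -- maximum principle
  obtain ⟨x, -, hx⟩ := Finset.exists_max_image Finset.univ D ⟨k, Finset.mem_univ k⟩
  have hx' : ∀ y, D y ≤ D x := fun y => hx y (Finset.mem_univ y)
  by_contra hpos
  push_neg at hpos
  have hxpos : 0 < D x := lt_of_lt_of_le hpos (hx' k)
  obtain ⟨p⟩ := G.connected x s
  exact walk_max_principle G B D hbdd hharmD p (by simp [hB]) hx' hxpos
end
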